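/- (The congruence underlying the convergence of the matrices M_{h,m} to M_{h,log} asserted after Definition 3.2 of the paper.) Let a ∈ O_L. Regard B and the C_j as matrices over L[[X]]; B is invertible over L[[X]] since det B = p. For m ≥ 1 set M_m := B^{−(m+1)}·C_m·C_{m−1}···C_1 ∈ M₂(L[[X]]). Then for every m ≥ 1, all four entries of p^{m+2}·(M_{m+1} − M_m) lie in ω_m·O_L[[X]]. -/

import Mathlib

/-!
Setting: `p ≥ 5` a prime, `𝕆` the ring of integers of a finite extension `L` of
`ℚ_p` (modelled as a characteristic-zero discrete valuation ring with uniformizer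
`ϖ ∣ p`), and `K` its fraction field (playing the role of `L`).
-/

open PowerSeries

/-- `ω_m = (1+X)^{p^m} − 1`. -/
noncomputable def omegaPS (p : ℕ) (R : Type*) [CommRing R] (m : ℕ) : PowerSeries R :=
  (1 + PowerSeries.X) ^ (p ^ m) - 1

/-- `Φ_m = Σ_{i<p} (1+X)^{i·p^{m−1}}` (meaningful for `m ≥ 1`). -/
noncomputable def PhiPS (p : ℕ) (R : Type*) [CommRing R] (m : ℕ) : PowerSeries R :=
  ∑ i ∈ Finset.range p, (1 + PowerSeries.X) ^ (i * p ^ (m - 1))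

/-- The matrix `C_j = ((a, 1), (−Φ_j, 0))`. -/
noncomputable def Cmat (p : ℕ) (R : Type*) [CommRing R] (a : R) (j : ℕ) :
    Matrix (Fin 2) (Fin 2) (PowerSeries R) :=
  !![PowerSeries.C (R := R) a, 1; -(PhiPS p R j), 0]

/-- The matrix `B = ((a, 1), (−p, 0))`. -/
noncomputable def Bmat (p : ℕ) (R : Type*) [CommRing R] (a : R) :
    Matrix (Fin 2) (Fin 2) (PowerSeries R) :=
  !![PowerSeries.C (R := R) a, 1; -(p : PowerSeries R), 0]

/-- `H_m = C_m · C_{m−1} ⋯ C_1` (with `H_0 = 1`). -/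
noncomputable def Hmat (p : ℕ) (R : Type*) [CommRing R] (a : R) :
    ℕ → Matrix (Fin 2) (Fin 2) (PowerSeries R)
  | 0 => 1
  | m + 1 => Cmat p R a (m + 1) * Hmat p R a m

/-- `M_m = B^{−(m+1)}·C_m·C_{m−1}⋯C_1`, over `K⟦X⟧`. -/
noncomputable def Mmat (p : ℕ) (K : Type*) [Field K] (a : K) (m : ℕ) :
    Matrix (Fin 2) (Fin 2) (PowerSeries K) :=
  (Bmat p K a)⁻¹ ^ (m + 1) * Hmat p K a m

/-!
Since `det B = p`, we have `p · B⁻¹ = adj B`, and `M_m = B^{-(m+2)} · B · H_m`; hence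
`p^{m+2} (M_{m+1} − M_m) = (adj B)^{m+2} (C_{m+1} − B) H_m`. Every factor on the right has
entries in `𝕆⟦X⟧`, and `C_{m+1} − B` has the single nonzero entry `p − Φ_{m+1}`, which is
divisible by `ω_m` because `Φ_{m+1} = Σ_{i<p} (1 + ω_m)^i`.
-/

namespace Matrix

variable {n R : Type*} [Fintype n] [DecidableEq n] [CommRing R]

theorem det_smul_nonsing_inv {B : Matrix n n R} (hB : IsUnit B.det) :
    B.det • B⁻¹ = B.adjugate := by
  rw [inv_def, smul_smul, Ring.mul_inverse_cancel _ hB, one_smul]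

theorem det_pow_smul_nonsing_inv_pow_mul_sub {B : Matrix n n R} (hB : IsUnit B.det)
    (C H : Matrix n n R) (k : ℕ) :
    B.det ^ (k + 1) • (B⁻¹ ^ (k + 1) * (C * H) - B⁻¹ ^ k * H) =
      B.adjugate ^ (k + 1) * ((C - B) * H) := by
  have hpow : B⁻¹ ^ k = B⁻¹ ^ (k + 1) * B := by
    rw [pow_succ, mul_assoc, nonsing_inv_mul _ hB, mul_one]
  rw [hpow, mul_assoc, ← mul_sub, ← sub_mul, ← smul_mul_assoc, ← smul_pow,
    det_smul_nonsing_inv hB]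

end Matrix

section BaseChange

variable {R S : Type*} [CommRing R] [CommRing S] (f : R →+* S) (p : ℕ)

theorem map_omegaPS (m : ℕ) : PowerSeries.map f (omegaPS p R m) = omegaPS p S m := by
  simp [omegaPS]

theorem map_PhiPS (j : ℕ) : PowerSeries.map f (PhiPS p R j) = PhiPS p S j := by
  simp [PhiPS]

theorem map_Cmat (a : R) (j : ℕ) :
    (PowerSeries.map f).mapMatrix (Cmat p R a j) = Cmat p S (f a) j := by
  ext i k
  fin_cases i <;> fin_cases k <;> simp [Cmat, map_PhiPS]

theorem map_Bmat (a : R) : (PowerSeries.map f).mapMatrix (Bmat p R a) = Bmat p S (f a) := by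
  ext i k
  fin_cases i <;> fin_cases k <;> simp [Bmat]

theorem map_Hmat (a : R) (m : ℕ) :
    (PowerSeries.map f).mapMatrix (Hmat p R a m) = Hmat p S (f a) m := by
  induction m with
  | zero => simp [Hmat]
  | succ m ih => rw [Hmat, map_mul, map_Cmat, ih, Hmat]

end BaseChange

section Congruence

variable (p : ℕ) (R : Type*) [CommRing R]

/-- The quotient `(Φ_{m+1} − p) / ω_m`: each summand `(1 + ω_m)^i − 1` of `Φ_{m+1} − p`
is `ω_m` times a geometric sum. -/
noncomputable def PhiSubQuotPS (m : ℕ) : PowerSeries R :=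
  ∑ i ∈ Finset.range p, ∑ k ∈ Finset.range i, ((1 + X : PowerSeries R) ^ p ^ m) ^ k

theorem PhiPS_succ_sub_natCast (m : ℕ) :
    PhiPS p R (m + 1) - p = omegaPS p R m * PhiSubQuotPS p R m := by
  have hp : (p : PowerSeries R) = ∑ _i ∈ Finset.range p, 1 := by simp
  rw [PhiPS, hp, ← Finset.sum_sub_distrib, PhiSubQuotPS, Finset.mul_sum]
  refine Finset.sum_congr rfl fun i _ => ?_
  rw [Nat.add_sub_cancel, mul_comm i, pow_mul, ← geom_sum_mul, omegaPS]
  ring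

theorem Cmat_succ_sub_Bmat (a : R) (m : ℕ) :
    Cmat p R a (m + 1) - Bmat p R a = omegaPS p R m • !![0, 0; -PhiSubQuotPS p R m, 0] := by
  have h := PhiPS_succ_sub_natCast p R m
  refine Matrix.ext fun i k => ?_
  fin_cases i <;> fin_cases k <;> simp [Cmat, Bmat]
  linear_combination -h

theorem det_Bmat (a : R) : (Bmat p R a).det = p := by
  simp [Bmat, Matrix.det_fin_two_of]

end Congruence

theorem Mlog_convergence_congruence_general
    (p : ℕ) (hp : p.Prime)
    (𝕆 : Type*) [CommRing 𝕆] [CharZero 𝕆]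
    (K : Type*) [Field K] [Algebra 𝕆 K] [IsFractionRing 𝕆 K]
    (a : 𝕆) (m : ℕ) :
    ∀ i j : Fin 2, ∃ g : PowerSeries 𝕆,
      (p : PowerSeries K) ^ (m + 2) *
          (Mmat p K (algebraMap 𝕆 K a) (m + 1) - Mmat p K (algebraMap 𝕆 K a) m) i j
        = omegaPS p K m * (g.map (algebraMap 𝕆 K)) := by
  set f := algebraMap 𝕆 K
  have : CharZero K := (RingHom.charZero_iff (IsFractionRing.injective 𝕆 K)).mp inferInstance
  have hB : IsUnit (Bmat p K (f a)).det := by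
    rw [det_Bmat, isUnit_iff_constantCoeff]
    simpa using hp.ne_zero
  set N := (Bmat p 𝕆 a).adjugate ^ (m + 2) * (!![0, 0; -PhiSubQuotPS p 𝕆 m, 0] * Hmat p 𝕆 a m)
  have key : (p : PowerSeries K) ^ (m + 2) • (Mmat p K (f a) (m + 1) - Mmat p K (f a) m) =
      (PowerSeries.map f).mapMatrix (omegaPS p 𝕆 m • N) := by
    rw [← det_Bmat p K (f a), Mmat, Mmat, Hmat, Matrix.det_pow_smul_nonsing_inv_pow_mul_sub hB,
      ← map_Cmat, ← map_Bmat, ← map_Hmat, ← RingHom.map_adjugate, ← map_sub, ← map_pow,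
      ← map_mul, ← map_mul, Cmat_succ_sub_Bmat, smul_mul_assoc, mul_smul_comm]
  intro i j
  refine ⟨N i j, ?_⟩
  simpa [map_omegaPS] using congr_fun₂ key i j

/-- the congruence underlying the convergence of the matrices
`M_{h,m}` to `M_{h,log}`: for every `m ≥ 1`, all four entries of
`p^{m+2}·(M_{m+1} − M_m)` lie in `ω_m·𝕆⟦X⟧` (inside `K⟦X⟧`, where `K` is the
fraction field of `𝕆`). -/
theorem Mlog_convergence_congruence
    (p : ℕ) (hp : p.Prime) (hp5 : 5 ≤ p)
    (𝕆 : Type*) [CommRing 𝕆] [IsDomain 𝕆] [IsDiscreteValuationRing 𝕆] [CharZero 𝕆]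
    (ϖ : 𝕆) (hϖ : Irreducible ϖ) (hpϖ : ϖ ∣ (p : 𝕆))
    (K : Type*) [Field K] [Algebra 𝕆 K] [IsFractionRing 𝕆 K]
    (a : 𝕆) (m : ℕ) (hm : 1 ≤ m) :
    ∀ i j : Fin 2, ∃ g : PowerSeries 𝕆,
      (p : PowerSeries K) ^ (m + 2) *
          (Mmat p K (algebraMap 𝕆 K a) (m + 1) - Mmat p K (algebraMap 𝕆 K a) m) i j
        = omegaPS p K m * (g.map (algebraMap 𝕆 K)) :=
  Mlog_convergence_congruence_general p hp 𝕆 K a m
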